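/- Orthologic is strictly weaker than classical logic: for distinct variables x and y, the sequent ((x ∧ (¬x ∨ y))^L, y^R) is not provable in the orthologic proof system without non-logical axioms, even though x ∧ (¬x ∨ y) → y is a classical propositional tautology. Equivalently, there exists an ortholattice L and elements a, b ∈ L with a ⊓ (aᶜ ⊔ b) ≰ b. -/

import Mathlib

/-- Propositional formulas over a set `X` of variables. -/
inductive Formula (X : Type) : Type
  | var : X → Formula X
  | bot : Formula X
  | top : Formula X
  | and : Formula X → Formula X → Formula X
  | or : Formula X → Formula X → Formula X
  | not : Formula X → Formula X

/-- An ortholattice: a bounded lattice with a complement operation. -/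
class Ortholattice (L : Type) extends Lattice L, BoundedOrder L where
  compl : L → L
  compl_compl : ∀ x : L, compl (compl x) = x
  compl_sup : ∀ x y : L, compl (x ⊔ y) = compl x ⊓ compl y
  compl_inf : ∀ x y : L, compl (x ⊓ y) = compl x ⊔ compl y
  inf_compl : ∀ x : L, x ⊓ compl x = ⊥
  sup_compl : ∀ x : L, x ⊔ compl x = ⊤

/-- Homomorphic extension of a valuation `v : X → L` to formulas. -/
def Formula.eval {X L : Type} [Ortholattice L] (v : X → L) : Formula X → L
  | .var x => v x
  | .bot => ⊥
  | .top => ⊤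
  | .and φ ψ => φ.eval v ⊓ ψ.eval v
  | .or φ ψ => φ.eval v ⊔ ψ.eval v
  | .not φ => Ortholattice.compl (φ.eval v)

/-- Annotated formulas: a formula marked as left (`L`) or right (`R`). -/
inductive Ann (X : Type) : Type
  | L : Formula X → Ann X
  | R : Formula X → Ann X

/-- The underlying formula of an annotated formula. -/
def Ann.fml {X : Type} : Ann X → Formula X
  | .L φ => φ
  | .R φ => φ

/-- An orthologic sequent: an unordered pair of annotated formulas. -/
abbrev Sequent (X : Type) := Sym2 (Ann X)

/-- The orthologic proof system, with non-logical axioms `A`. -/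
inductive OLProof {X : Type} (A : Set (Sequent X)) : Sequent X → Prop
  | ax {t : Sequent X} : t ∈ A → OLProof A t
  | hyp (φ : Formula X) : OLProof A s(Ann.L φ, Ann.R φ)
  | cut (Γ Δ : Ann X) (φ : Formula X) :
      OLProof A s(Γ, Ann.R φ) → OLProof A s(Ann.L φ, Δ) → OLProof A s(Γ, Δ)
  | replace (Γ Δ : Ann X) : OLProof A s(Γ, Γ) → OLProof A s(Γ, Δ)
  | andL₁ (φ ψ : Formula X) (Δ : Ann X) :
      OLProof A s(Ann.L φ, Δ) → OLProof A s(Ann.L (φ.and ψ), Δ)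
  | andL₂ (φ ψ : Formula X) (Δ : Ann X) :
      OLProof A s(Ann.L ψ, Δ) → OLProof A s(Ann.L (φ.and ψ), Δ)
  | andR (Γ : Ann X) (φ ψ : Formula X) :
      OLProof A s(Γ, Ann.R φ) → OLProof A s(Γ, Ann.R ψ) → OLProof A s(Γ, Ann.R (φ.and ψ))
  | orL (φ ψ : Formula X) (Δ : Ann X) :
      OLProof A s(Ann.L φ, Δ) → OLProof A s(Ann.L ψ, Δ) → OLProof A s(Ann.L (φ.or ψ), Δ)
  | orR₁ (Γ : Ann X) (φ ψ : Formula X) :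
      OLProof A s(Γ, Ann.R φ) → OLProof A s(Γ, Ann.R (φ.or ψ))
  | orR₂ (Γ : Ann X) (φ ψ : Formula X) :
      OLProof A s(Γ, Ann.R ψ) → OLProof A s(Γ, Ann.R (φ.or ψ))
  | negL (Γ : Ann X) (φ : Formula X) :
      OLProof A s(Γ, Ann.R φ) → OLProof A s(Γ, Ann.L φ.not)
  | negR (φ : Formula X) (Δ : Ann X) :
      OLProof A s(Ann.L φ, Δ) → OLProof A s(Ann.R φ.not, Δ)
  | botL (Δ : Ann X) : OLProof A s(Ann.L Formula.bot, Δ)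
  | topR (Γ : Ann X) : OLProof A s(Γ, Ann.R Formula.top)

/-- Satisfaction of an (ordered) pair of annotated formulas by a valuation. -/
def AnnSat {X L : Type} [Ortholattice L] (v : X → L) : Ann X → Ann X → Prop
  | .L φ, .R ψ => φ.eval v ≤ ψ.eval v
  | .R φ, .L ψ => ψ.eval v ≤ φ.eval v
  | .L φ, .L ψ => φ.eval v ⊓ ψ.eval v = ⊥
  | .R φ, .R ψ => φ.eval v ⊔ ψ.eval v = ⊤

/-- A valuation satisfies a sequent. -/
def SeqSat {X L : Type} [Ortholattice L] (v : X → L) (t : Sequent X) : Prop :=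
  ∀ a b : Ann X, t = s(a, b) → AnnSat v a b
/-- Boolean (classical) evaluation of a formula. -/
def Formula.evalB {X : Type} (v : X → Bool) : Formula X → Bool
  | .var x => v x
  | .bot => false
  | .top => true
  | .and φ ψ => φ.evalB v && ψ.evalB v
  | .or φ ψ => φ.evalB v || ψ.evalB v
  | .not φ => !(φ.evalB v)

/-- Size of a formula (number of nodes). -/
def Formula.size {X : Type} : Formula X → Nat
  | .var _ => 1
  | .bot => 1
  | .top => 1
  | .and φ ψ => φ.size + ψ.size + 1
  | .or φ ψ => φ.size + ψ.size + 1
  | .not φ => φ.size + 1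

/-- Negation normal form. -/
def Formula.nnf {X : Type} : Formula X → Formula X
  | .var x => .var x
  | .bot => .bot
  | .top => .top
  | .and φ ψ => .and φ.nnf ψ.nnf
  | .or φ ψ => .or φ.nnf ψ.nnf
  | .not (.var x) => .not (.var x)
  | .not .bot => .top
  | .not .top => .bot
  | .not (.and φ ψ) => .or φ.not.nnf ψ.not.nnf
  | .not (.or φ ψ) => .and φ.not.nnf ψ.not.nnf
  | .not (.not φ) => φ.nnf
termination_by φ => φ.size
decreasing_by all_goals (simp [Formula.size] <;> omega)

/-- A formula is in NNF if negation occurs only directly on variables. -/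
def Formula.IsNNF {X : Type} : Formula X → Prop
  | .var _ => True
  | .bot => True
  | .top => True
  | .and φ ψ => φ.IsNNF ∧ ψ.IsNNF
  | .or φ ψ => φ.IsNNF ∧ ψ.IsNNF
  | .not (.var _) => True
  | .not _ => False

/-- `getInverse φ = nnf (¬ φ)`. -/
def getInverse {X : Type} (φ : Formula X) : Formula X := φ.not.nnf

/-- Orthologic equivalence of formulas (without non-logical axioms). -/
def OLEquiv {X : Type} (φ ψ : Formula X) : Prop :=
  OLProof (∅ : Set (Sequent X)) s(Ann.L φ, Ann.R ψ) ∧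
  OLProof (∅ : Set (Sequent X)) s(Ann.L ψ, Ann.R φ)

/-- `Subformula γ φ` means `γ` is a subformula of `φ`. -/
inductive Subformula {X : Type} : Formula X → Formula X → Prop
  | refl (φ : Formula X) : Subformula φ φ
  | and_left {γ φ ψ : Formula X} : Subformula γ φ → Subformula γ (φ.and ψ)
  | and_right {γ φ ψ : Formula X} : Subformula γ ψ → Subformula γ (φ.and ψ)
  | or_left {γ φ ψ : Formula X} : Subformula γ φ → Subformula γ (φ.or ψ)
  | or_right {γ φ ψ : Formula X} : Subformula γ ψ → Subformula γ (φ.or ψ)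
  | not_sub {γ φ : Formula X} : Subformula γ φ → Subformula γ φ.not
/-!
A proof in orthologic is sound for every ortholattice once a sequent `(a, b)` is read as
`⟦a⟧ ≤ ⟦b⟧ᗮ`, where `φ^L` denotes `⟦φ⟧` and `φ^R` denotes `⟦φ⟧ᗮ`; this relation is symmetric,
so it is well defined on unordered pairs. In the six-element ortholattice O6 (the hexagon
`⊥ < p < qᗮ < ⊤`, `⊥ < q < pᗮ < ⊤`) modus ponens fails: `pᗮ ⊓ (p ⊔ q) = pᗮ ≰ q`. Evaluating
`x ↦ pᗮ`, `y ↦ q` therefore refutes the sequent `((x ∧ (¬x ∨ y))^L, y^R)`.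
-/

local postfix:max "ᗮ" => Ortholattice.compl

namespace Ortholattice

variable {L : Type} [Ortholattice L]

theorem compl_le_compl {a b : L} (h : a ≤ b) : bᗮ ≤ aᗮ := by
  rw [← sup_eq_right.mpr h, compl_sup]
  exact inf_le_left

theorem le_compl_comm {a b : L} : a ≤ bᗮ ↔ b ≤ aᗮ :=
  ⟨fun h => compl_compl b ▸ compl_le_compl h, fun h => compl_compl a ▸ compl_le_compl h⟩

theorem eq_bot_of_le_compl {a : L} (h : a ≤ aᗮ) : a = ⊥ :=
  le_bot_iff.mp (inf_compl a ▸ le_inf le_rfl h)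

end Ortholattice

variable {X L : Type} [Ortholattice L]

@[simp]
def Ann.eval (v : X → L) : Ann X → L
  | .L φ => φ.eval v
  | .R φ => (φ.eval v)ᗮ

def Sequent.Valid (v : X → L) : Sequent X → Prop :=
  Sym2.lift ⟨fun a b => a.eval v ≤ (b.eval v)ᗮ, fun _ _ => propext Ortholattice.le_compl_comm⟩

@[simp]
theorem Sequent.valid_mk (v : X → L) (a b : Ann X) :
    Sequent.Valid v s(a, b) ↔ a.eval v ≤ (b.eval v)ᗮ :=
  Iff.of_eq (Sym2.lift_mk _ a b)

attribute [local simp] Formula.eval Ortholattice.compl_compl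

theorem OLProof.valid {A : Set (Sequent X)} {t : Sequent X} (h : OLProof A t) (v : X → L)
    (hA : ∀ s ∈ A, s.Valid v) : t.Valid v := by
  induction h with
  | ax ht => exact hA _ ht
  | hyp => simp
  | cut _ _ _ _ _ ih₁ ih₂ =>
    simp only [Sequent.valid_mk, Ann.eval, Ortholattice.compl_compl] at ih₁ ih₂ ⊢
    exact ih₁.trans ih₂
  | replace _ _ _ ih =>
    rw [Sequent.valid_mk] at ih ⊢
    rw [Ortholattice.eq_bot_of_le_compl ih]
    exact bot_le
  | andL₁ _ _ _ _ ih => simpa using inf_le_left.trans (by simpa using ih)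
  | andL₂ _ _ _ _ ih => simpa using inf_le_right.trans (by simpa using ih)
  | andR => simp_all
  | orL => simp_all
  | orR₁ _ _ _ _ ih => simpa using le_sup_of_le_left (by simpa using ih)
  | orR₂ _ _ _ _ ih => simpa using le_sup_of_le_right (by simpa using ih)
  | negL _ _ _ ih => simpa using ih
  | negR _ _ _ ih => simpa using ih
  | botL => simp
  | topR => simp

theorem OLProof.eval_le {φ ψ : Formula X} (h : OLProof ∅ s(Ann.L φ, Ann.R ψ)) (v : X → L) :
    φ.eval v ≤ ψ.eval v := by
  simpa using h.valid v (by simp)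

inductive O6 : Type
  | bot | p | q | p' | q' | top
deriving DecidableEq

namespace O6

instance : Fintype O6 :=
  ⟨{bot, p, q, p', q', top}, fun a => by cases a <;> decide⟩

def leB : O6 → O6 → Bool
  | bot, _ | _, top => true
  | p, p | p, q' | q, q | q, p' | p', p' | q', q' => true
  | _, _ => false

instance : LE O6 := ⟨fun a b => leB a b⟩

instance : DecidableRel (α := O6) (· ≤ ·) := fun a b => inferInstanceAs (Decidable (leB a b))

instance : Lattice O6 where
  le_refl := by decide
  le_trans := by decide
  le_antisymm := by decide
  sup a b := if leB a b then b else if leB b a then a else top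
  le_sup_left := by decide
  le_sup_right := by decide
  sup_le := by decide
  inf a b := if leB a b then a else if leB b a then b else bot
  inf_le_left := by decide
  inf_le_right := by decide
  le_inf := by decide

instance : BoundedOrder O6 where
  top := top
  le_top := by decide
  bot := bot
  bot_le := by decide

def compl : O6 → O6
  | bot => top
  | top => bot
  | p => p'
  | p' => p
  | q => q'
  | q' => q

instance : Ortholattice O6 where
  compl := compl
  compl_compl := by decide
  compl_sup := by decide
  compl_inf := by decide
  inf_compl := by decide
  sup_compl := by decide

theorem not_modus_ponens : ¬ (p' ⊓ (p'ᗮ ⊔ q) ≤ q) := by decide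

end O6

theorem ol_strictly_weaker_general {X : Type}
    (x y : X) (hxy : x ≠ y) :
    ¬ OLProof (∅ : Set (Sequent X))
        s(Ann.L ((Formula.var x).and ((Formula.var x).not.or (Formula.var y))),
          Ann.R (Formula.var y)) ∧
    (∀ v : X → Bool,
      Formula.evalB v ((Formula.var x).and ((Formula.var x).not.or (Formula.var y))) = true →
      Formula.evalB v (Formula.var y) = true) ∧
    (∃ (L : Type) (inst : Ortholattice L) (a b : L),
      letI : Ortholattice L := inst
      ¬ (a ⊓ (Ortholattice.compl a ⊔ b) ≤ b)) := by
  refine ⟨fun h => ?_, fun v => ?_, O6, inferInstance, .p', .q, O6.not_modus_ponens⟩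
  · classical
    have := h.eval_le (Function.update (fun _ => O6.q) x O6.p')
    simp only [Formula.eval, Function.update_self, Function.update_of_ne hxy.symm] at this
    exact O6.not_modus_ponens this
  · simp only [Formula.evalB]
    cases v x <;> cases v y <;> decide

/-- Orthologic is strictly weaker than classical logic: for
distinct variables `x ≠ y`, the sequent `((x ∧ (¬x ∨ y))^L, y^R)` is not
provable, although `x ∧ (¬x ∨ y) → y` is a classical tautology; equivalently,
there is an ortholattice with elements `a`, `b` such that `a ⊓ (aᶜ ⊔ b) ≰ b`. -/
theorem ol_strictly_weaker {X : Type} [Countable X] [Infinite X]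
    (x y : X) (hxy : x ≠ y) :
    ¬ OLProof (∅ : Set (Sequent X))
        s(Ann.L ((Formula.var x).and ((Formula.var x).not.or (Formula.var y))),
          Ann.R (Formula.var y)) ∧
    (∀ v : X → Bool,
      Formula.evalB v ((Formula.var x).and ((Formula.var x).not.or (Formula.var y))) = true →
      Formula.evalB v (Formula.var y) = true) ∧
    (∃ (L : Type) (inst : Ortholattice L) (a b : L),
      letI : Ortholattice L := inst
      ¬ (a ⊓ (Ortholattice.compl a ⊔ b) ≤ b)) :=
  ol_strictly_weaker_general x y hxy
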